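/- In the Set Cover fitness graph, let S ⊆ V be a seed set such that the sets in S∩V₁ cover V₂ (i.e., every e ∈ V₂ belongs to some A ∈ S∩V₁). Then, writing α = ((x/n)/((x/n)+n))^n, the fixation probability satisfies fp_𝒢(S) ≥ ( (y/n²)·α / (1 − (1 − y/n²)·α) )^n. -/

import Mathlib

open Finset
open scoped Classical

/-- A fitness graph: a finite strongly connected weighted directed graph together with
mutant and resident fitness functions. `w u v > 0` encodes that `(u,v)` is an edge
of non-zero weight; `w u ·` is a probability distribution. -/
structure FitnessGraph (V : Type) [Fintype V] [DecidableEq V] where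
  w : V → V → ℝ
  m : V → ℝ
  r : V → ℝ
  w_nonneg : ∀ u v, 0 ≤ w u v
  w_rowsum : ∀ u, ∑ v, w u v = 1
  strongly_connected : ∀ u v : V, Relation.ReflTransGen (fun a b => 0 < w a b) u v
  m_pos : ∀ u, 0 < m u
  r_pos : ∀ u, 0 < r u

variable {V : Type} [Fintype V] [DecidableEq V]

/-- A fitness graph is mutant-biased if `m(u) ≥ r(u)` for every node `u`. -/
def FitnessGraph.MutantBiased (G : FitnessGraph V) : Prop :=
  ∀ u, G.r u ≤ G.m u

/-- The (out-)degree of a node: the number of neighbors along edges of non-zero weight. -/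
noncomputable def FitnessGraph.deg (G : FitnessGraph V) (u : V) : ℕ :=
  (Finset.univ.filter fun v => 0 < G.w u v).card

/-- A fitness graph is undirected if its edge relation is symmetric and the weights
are uniform: `w(u,v) = 1/d(u)` for every edge `(u,v)`. -/
def FitnessGraph.Undirected (G : FitnessGraph V) : Prop :=
  (∀ u v, 0 < G.w u v → 0 < G.w v u) ∧
  ∀ u v, 0 < G.w u v → G.w u v = 1 / (G.deg u : ℝ)

/-- The fitness of node `u` in configuration `X`: `m(u)` if `u` is a mutant, `r(u)` otherwise. -/
def FitnessGraph.fit (G : FitnessGraph V) (X : Finset V) (u : V) : ℝ :=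
  if u ∈ X then G.m u else G.r u

/-- Total population fitness in configuration `X`. -/
def FitnessGraph.totalFit (G : FitnessGraph V) (X : Finset V) : ℝ :=
  ∑ u, G.fit X u

/-- The configuration resulting from `X` when `u` reproduces and replaces `v`. -/
def moranNext (X : Finset V) (u v : V) : Finset V :=
  if u ∈ X then insert v X else X.erase v

/-- One-step transition probability of the Heterogeneous Moran process. -/
noncomputable def FitnessGraph.step (G : FitnessGraph V) (X Y : Finset V) : ℝ :=
  ∑ u, ∑ v, (G.fit X u / G.totalFit X) * G.w u v * (if moranNext X u v = Y then 1 else 0)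

/-- `t`-step transition probability of the Heterogeneous Moran process. -/
noncomputable def FitnessGraph.stepN (G : FitnessGraph V) : ℕ → Finset V → Finset V → ℝ
  | 0, X, Y => if X = Y then 1 else 0
  | t + 1, X, Y => ∑ Z, FitnessGraph.stepN G t X Z * G.step Z Y

/-- Fixation probability: the probability that, started from seed set `S`, the process
eventually reaches the all-mutant configuration `V`; since `V` is absorbing this equals
`⨆ t, P(X_t = V)`. -/
noncomputable def FitnessGraph.fp (G : FitnessGraph V) (S : Finset V) : ℝ :=
  ⨆ t : ℕ, G.stepN t S Finset.univ

/-- One-step transition probability of the Moran process stopped upon reaching the set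
of configurations `A` (configurations in `A` are made absorbing). -/
noncomputable def stopStep (G : FitnessGraph V) (A : Set (Finset V)) (X Y : Finset V) : ℝ :=
  if X ∈ A then (if Y = X then 1 else 0) else G.step X Y

/-- `t`-step transition probability of the stopped process. -/
noncomputable def stopStepN (G : FitnessGraph V) (A : Set (Finset V)) :
    ℕ → Finset V → Finset V → ℝ
  | 0, X, Y => if X = Y then 1 else 0
  | t + 1, X, Y => ∑ Z, stopStepN G A t X Z * stopStep G A Z Y

/-- The probability that the Heterogeneous Moran process started at `X0` ever reaches a
configuration in `A`: the supremum over `t` of the probability that the process stopped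
at `A` is in `A` at time `t`. -/
noncomputable def reachProb (G : FitnessGraph V) (A : Set (Finset V)) (X0 : Finset V) : ℝ :=
  ⨆ t : ℕ, ∑ Y ∈ Finset.univ.filter (fun Y => Y ∈ A), stopStepN G A t X0 Y

/-- The Set Cover fitness graph for an instance `(U, 𝒮)` with parameters `x ≥ 1` and
`0 < y ≤ 1`: the vertex set is `V₁ ⊔ V₂` with `V₁ = 𝒮`, `V₂ = U`; there is an edge from
`A ∈ V₁` to each `e ∈ A` and all edges from `V₂` to `V₁`, with uniform weights;
residents have fitness `1` everywhere, mutants have fitness `x` on `V₁` and `y` on `V₂`. -/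
def IsSetCoverGraph {U : Type} [Fintype U] [DecidableEq U] (𝒮 : Finset (Finset U))
    (x y : ℝ) (G : FitnessGraph ({A // A ∈ 𝒮} ⊕ U)) : Prop :=
  (∀ (A : {A // A ∈ 𝒮}) (e : U),
      G.w (Sum.inl A) (Sum.inr e) = if e ∈ A.1 then 1 / (A.1.card : ℝ) else 0) ∧
  (∀ A B : {A // A ∈ 𝒮}, G.w (Sum.inl A) (Sum.inl B) = 0) ∧
  (∀ (e : U) (A : {A // A ∈ 𝒮}), G.w (Sum.inr e) (Sum.inl A) = 1 / (𝒮.card : ℝ)) ∧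
  (∀ e e' : U, G.w (Sum.inr e) (Sum.inr e') = 0) ∧
  (∀ A : {A // A ∈ 𝒮}, G.m (Sum.inl A) = x) ∧
  (∀ e : U, G.m (Sum.inr e) = y) ∧
  (∀ u : {A // A ∈ 𝒮} ⊕ U, G.r u = 1)

/-!
Call a configuration `X` covering when its mutant set-nodes cover `U`, and put
`Φ X = qa ^ #(set-nodes outside X) * qb ^ #(element-nodes outside X)` on covering
configurations, `Φ X = 0` elsewhere. For `qb = x / (x + n)` and
`qa = y (x + n) / (y (x + n) + |𝒮| n)` the potential `Φ` is subharmonic for the Moran chain.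
Group the drift by element node `e`. A mutant `e` is lost only when a resident set `A ∋ e`
fires on it, and `e` itself converts `A` at rate `y / |𝒮|`, multiplying `Φ` by `1 / qa`,
which compensates exactly. A resident `e` costs at most `Φ X` in total, while a mutant set
covering it re-infects it at rate `≥ x / |U|`, multiplying `Φ` by `1 / qb`.
As `Φ ≤ 1`, `Φ ∅ = 0` and the mass on non-absorbing configurations decays geometrically
(`∅` is reachable from every configuration other than `V`), `Φ S ≤ fp S`.
Finally the claimed bound `q` satisfies `q ≤ qa` and `q ≤ qb`, so `q ^ n ≤ Φ S`.
-/

open Matrix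

namespace Matrix

variable {ι : Type*} [Fintype ι] [DecidableEq ι] {P : Matrix ι ι ℝ}

def IsAbsorbing (P : Matrix ι ι ℝ) (a : ι) : Prop :=
  P a = Pi.single a 1

lemma IsAbsorbing.mulVec_apply {a : ι} (ha : P.IsAbsorbing a) (v : ι → ℝ) :
    (P *ᵥ v) a = v a := by
  rw [mulVec, ha, single_one_dotProduct]

lemma IsAbsorbing.pow {a : ι} (ha : P.IsAbsorbing a) (t : ℕ) : (P ^ t).IsAbsorbing a := by
  unfold IsAbsorbing at *
  induction t with
  | zero => ext j; simp [one_apply, Pi.single_apply, eq_comm]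
  | succ t ih =>
    ext j
    rw [pow_succ', mul_apply, ha]
    simp [Pi.single_apply, ih]

lemma mulVec_mono_of_mem_rowStochastic (hP : P ∈ rowStochastic ℝ ι) {v w : ι → ℝ}
    (h : v ≤ w) : P *ᵥ v ≤ P *ᵥ w := by
  intro i
  have := nonneg_mulVec_of_mem_rowStochastic hP (x := w - v) (fun j => sub_nonneg.2 (h j)) i
  rwa [mulVec_sub, Pi.sub_apply, sub_nonneg] at this

lemma le_pow_mulVec_of_le_mulVec (hP : P ∈ rowStochastic ℝ ι) {φ : ι → ℝ}
    (h : φ ≤ P *ᵥ φ) (t : ℕ) : φ ≤ (P ^ t) *ᵥ φ := by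
  induction t with
  | zero => simp
  | succ t ih =>
    rw [pow_succ, ← mulVec_mulVec]
    exact ih.trans (mulVec_mono_of_mem_rowStochastic (pow_mem hP t) h)

lemma pow_mulVec_le_of_mulVec_le (hP : P ∈ rowStochastic ℝ ι) {g : ι → ℝ} {r : ℝ}
    (hr : 0 ≤ r) (h : P *ᵥ g ≤ r • g) (k : ℕ) : (P ^ k) *ᵥ g ≤ r ^ k • g := by
  induction k with
  | zero => simp
  | succ k ih =>
    rw [pow_succ' P, ← mulVec_mulVec, pow_succ r, mul_smul]
    calc P *ᵥ ((P ^ k) *ᵥ g) ≤ P *ᵥ (r ^ k • g) := mulVec_mono_of_mem_rowStochastic hP ih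
      _ = r ^ k • (P *ᵥ g) := mulVec_smul _ _ _
      _ ≤ r ^ k • (r • g) := smul_le_smul_of_nonneg_left h (pow_nonneg hr k)

lemma exists_pow_mulVec_le_smul_of_reach (hP : P ∈ rowStochastic ℝ ι) {a b : ι}
    (ha : P.IsAbsorbing a) (hb : P.IsAbsorbing b) {N : ℕ}
    (hreach : ∀ s, s ≠ b → 0 < (P ^ N) s a) :
    ∃ r : ℝ, 0 ≤ r ∧ r < 1 ∧
      (P ^ N) *ᵥ ({a, b}ᶜ : Set ι).indicator 1 ≤ r • ({a, b}ᶜ : Set ι).indicator 1 := by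
  have : Nonempty ι := ⟨b⟩
  -- `δ` is the least probability, over the states `s ≠ b`, of being at `a` after `N` steps.
  obtain ⟨s₀, hs₀⟩ := Finite.exists_min fun s => if s = b then 1 else (P ^ N) s a
  set δ := if s₀ = b then 1 else (P ^ N) s₀ a
  have hδ0 : 0 < δ := by
    unfold δ; split_ifs with h
    exacts [one_pos, hreach s₀ h]
  have hδ1 : δ ≤ 1 := by simpa using hs₀ b
  refine ⟨1 - δ, by linarith, by linarith, fun s => ?_⟩
  by_cases hs : s ∈ ({a, b} : Set ι)
  · rcases hs with rfl | rfl
    · simp [(ha.pow N).mulVec_apply]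
    · simp [(hb.pow N).mulVec_apply]
  · have hg : ({a, b}ᶜ : Set ι).indicator (1 : ι → ℝ) ≤ 1 - Pi.single a 1 := by
      intro i
      by_cases hi : i = a
      · simp [hi]
      · rw [Pi.sub_apply, Pi.single_eq_of_ne hi, sub_zero]
        exact Set.indicator_le_self' (fun _ _ => zero_le_one) i
    have hPg := mulVec_mono_of_mem_rowStochastic (pow_mem hP N) hg s
    have hrow : ((P ^ N) *ᵥ (1 - Pi.single a 1)) s = 1 - (P ^ N) s a := by
      rw [mulVec_sub, one_vecMul_of_mem_rowStochastic (pow_mem hP N), mulVec_single_one]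
      rfl
    have hδs : δ ≤ (P ^ N) s a := by simpa [show s ≠ b from fun h => hs (Or.inr h)] using hs₀ s
    rw [Pi.smul_apply, Set.indicator_of_mem (Set.mem_compl hs), Pi.one_apply, smul_eq_mul,
      mul_one]
    linarith

theorem le_iSup_pow_apply_of_le_mulVec (hP : P ∈ rowStochastic ℝ ι) {a b : ι}
    (ha : P.IsAbsorbing a) (hb : P.IsAbsorbing b) {N : ℕ}
    (hreach : ∀ s, s ≠ b → 0 < (P ^ N) s a) {φ : ι → ℝ} (hφ1 : φ ≤ 1) (hφa : φ a = 0)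
    (hsub : φ ≤ P *ᵥ φ) (s : ι) : φ s ≤ ⨆ t, (P ^ t) s b := by
  obtain ⟨r, hr0, hr1, hdecay⟩ := exists_pow_mulVec_le_smul_of_reach hP ha hb hreach
  set g : ι → ℝ := ({a, b}ᶜ : Set ι).indicator 1
  have hg1 : g ≤ 1 := Set.indicator_le_self' fun _ _ => zero_le_one
  have hφg : φ ≤ Pi.single b 1 + g := by
    intro i
    by_cases hia : i = a
    · subst hia
      simp only [hφa, Pi.add_apply]
      exact add_nonneg ((Pi.single_nonneg.2 zero_le_one : (0 : ι → ℝ) ≤ Pi.single b 1) i)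
        (Set.indicator_nonneg (fun _ _ => zero_le_one) i)
    · by_cases hib : i = b
      · subst hib; simpa [g] using hφ1 i
      · simpa [g, hia, hib] using hφ1 i
  have hbound : ∀ t, φ s ≤ (P ^ t) s b + ((P ^ t) *ᵥ g) s := fun t => by
    have := (le_pow_mulVec_of_le_mulVec hP hsub t).trans
      (mulVec_mono_of_mem_rowStochastic (pow_mem hP t) hφg) s
    rwa [mulVec_add, mulVec_single_one, Pi.add_apply] at this
  have hbdd : BddAbove (Set.range fun t => (P ^ t) s b) :=
    ⟨1, by rintro _ ⟨t, rfl⟩; exact le_one_of_mem_rowStochastic (pow_mem hP t)⟩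
  refine le_of_forall_pos_le_add fun ε hε => ?_
  obtain ⟨k, hk⟩ := exists_pow_lt_of_lt_one hε hr1
  have hgk : ((P ^ (N * k)) *ᵥ g) s ≤ r ^ k := by
    rw [pow_mul]
    calc _ ≤ r ^ k * g s := pow_mulVec_le_of_mulVec_le (pow_mem hP N) hr0 hdecay k s
      _ ≤ r ^ k := mul_le_of_le_one_right (pow_nonneg hr0 k) (hg1 s)
  linarith [hbound (N * k), le_ciSup hbdd (N * k)]

end Matrix

namespace FitnessGraph

variable (G : FitnessGraph V)

lemma fit_pos (X : Finset V) (u : V) : 0 < G.fit X u := by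
  unfold fit; split
  exacts [G.m_pos u, G.r_pos u]

lemma totalFit_pos [Nonempty V] (X : Finset V) : 0 < G.totalFit X :=
  Finset.sum_pos (fun u _ => G.fit_pos X u) Finset.univ_nonempty

lemma w_le_one (u v : V) : G.w u v ≤ 1 :=
  G.w_rowsum u ▸ Finset.single_le_sum (fun v _ => G.w_nonneg u v) (Finset.mem_univ v)

noncomputable def transitionMatrix : Matrix (Finset V) (Finset V) ℝ :=
  Matrix.of G.step

lemma stepN_eq_pow (t : ℕ) : G.stepN t = G.transitionMatrix ^ t := by
  induction t with
  | zero => ext X Y; simp [stepN, Matrix.one_apply]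
  | succ t ih => ext X Y; simp [stepN, ih, pow_succ, Matrix.mul_apply, transitionMatrix]

lemma transitionMatrix_mulVec (φ : Finset V → ℝ) (X : Finset V) :
    (G.transitionMatrix *ᵥ φ) X
      = ∑ u, ∑ v, G.fit X u / G.totalFit X * G.w u v * φ (moranNext X u v) := by
  simp only [transitionMatrix, Matrix.mulVec, dotProduct, Matrix.of_apply, step,
    Finset.sum_mul]
  rw [Finset.sum_comm]
  refine Finset.sum_congr rfl fun u _ => ?_
  rw [Finset.sum_comm]
  simp [mul_ite, ite_mul]

lemma sum_sum_fit_div_mul_w [Nonempty V] (X : Finset V) :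
    ∑ u, ∑ v, G.fit X u / G.totalFit X * G.w u v = 1 := by
  simp_rw [← Finset.mul_sum, G.w_rowsum, mul_one, ← Finset.sum_div]
  exact div_self (G.totalFit_pos X).ne'

lemma transitionMatrix_mem_rowStochastic [Nonempty V] :
    G.transitionMatrix ∈ Matrix.rowStochastic ℝ (Finset V) := by
  refine Matrix.mem_rowStochastic.2 ⟨fun X Y => ?_, funext fun X => ?_⟩
  · refine Finset.sum_nonneg fun u _ => Finset.sum_nonneg fun v _ => ?_
    have := div_pos (G.fit_pos X u) (G.totalFit_pos X)
    have := G.w_nonneg u v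
    positivity
  · simpa [G.sum_sum_fit_div_mul_w X] using G.transitionMatrix_mulVec 1 X

lemma isAbsorbing_of_forall_moranNext_eq [Nonempty V] {X : Finset V}
    (h : ∀ u v, moranNext X u v = X) : G.transitionMatrix.IsAbsorbing X := by
  ext Y
  simp only [transitionMatrix, Matrix.of_apply, step, h, Pi.single_apply, eq_comm (a := Y)]
  split_ifs
  · simpa using G.sum_sum_fit_div_mul_w X
  · simp

def driftTerm (φ : Finset V → ℝ) (X : Finset V) (u v : V) : ℝ :=
  G.fit X u * G.w u v * (φ (moranNext X u v) - φ X)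

def drift (φ : Finset V → ℝ) (X : Finset V) : ℝ :=
  ∑ u, ∑ v, G.driftTerm φ X u v

lemma le_mulVec_of_drift_nonneg [Nonempty V] {φ : Finset V → ℝ} {X : Finset V}
    (h : 0 ≤ G.drift φ X) : φ X ≤ (G.transitionMatrix *ᵥ φ) X := by
  have hdiff : (G.transitionMatrix *ᵥ φ) X - φ X = G.drift φ X / G.totalFit X := by
    conv_lhs => rw [G.transitionMatrix_mulVec, ← one_mul (φ X), ← G.sum_sum_fit_div_mul_w X]
    simp only [drift, driftTerm, Finset.sum_mul, ← Finset.sum_sub_distrib, Finset.sum_div]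
    refine Finset.sum_congr rfl fun u _ => Finset.sum_congr rfl fun v _ => ?_
    ring
  have := div_nonneg h (G.totalFit_pos X).le
  linarith

lemma exists_w_pos_of_nonempty_of_ne_univ {X : Finset V} (hne : X.Nonempty)
    (hnu : X ≠ Finset.univ) : ∃ p ∉ X, ∃ q ∈ X, 0 < G.w p q := by
  obtain ⟨q, hq⟩ := hne
  obtain ⟨p, hp⟩ : ∃ p, p ∉ X := by
    by_contra! h
    exact hnu (Finset.eq_univ_iff_forall.2 h)
  induction G.strongly_connected p q with
  | refl => exact absurd hq hp
  | @tail b c _ hbc ih =>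
    by_cases hb : b ∈ X
    · exact ih hb
    · exact ⟨b, hb, c, hq, hbc⟩

lemma div_mul_w_le_transitionMatrix [Nonempty V] (X : Finset V) (p q : V) :
    G.fit X p / G.totalFit X * G.w p q ≤ G.transitionMatrix X (moranNext X p q) := by
  have hnn : ∀ u v, 0 ≤ G.fit X u / G.totalFit X * G.w u v *
      (if moranNext X u v = moranNext X p q then 1 else 0) := fun u v => by
    have := div_pos (G.fit_pos X u) (G.totalFit_pos X)
    have := G.w_nonneg u v
    positivity
  calc G.fit X p / G.totalFit X * G.w p q
      = G.fit X p / G.totalFit X * G.w p q *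
          (if moranNext X p q = moranNext X p q then 1 else 0) := by simp
    _ ≤ _ := Finset.single_le_sum (fun v _ => hnn p v) (Finset.mem_univ q)
    _ ≤ _ := Finset.single_le_sum (fun u _ => Finset.sum_nonneg fun v _ => hnn u v)
          (Finset.mem_univ p)

lemma pow_transitionMatrix_apply_empty_pos [Nonempty V] (t : ℕ) :
    ∀ X : Finset V, X ≠ Finset.univ → X.card ≤ t → 0 < (G.transitionMatrix ^ t) X ∅ := by
  have habs := G.isAbsorbing_of_forall_moranNext_eq (X := ∅) (by simp [moranNext])
  induction t with
  | zero =>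
    intro X _ hX
    rw [Finset.card_eq_zero.1 (Nat.le_zero.1 hX), (habs.pow 0)]
    simp
  | succ t ih =>
    intro X hnu hX
    obtain rfl | hne := X.eq_empty_or_nonempty
    · rw [habs.pow]; simp
    obtain ⟨p, hp, q, hq, hpq⟩ := G.exists_w_pos_of_nonempty_of_ne_univ hne hnu
    have hnext : moranNext X p q = X.erase q := by simp [moranNext, hp]
    have hstep : 0 < G.transitionMatrix X (X.erase q) :=
      hnext ▸ (mul_pos (div_pos (G.fit_pos X p) (G.totalFit_pos X)) hpq).trans_le
        (G.div_mul_w_le_transitionMatrix X p q)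
    have hrest : 0 < (G.transitionMatrix ^ t) (X.erase q) ∅ :=
      ih _ (fun h => hp (Finset.mem_of_mem_erase (h ▸ Finset.mem_univ p)))
        (by rw [Finset.card_erase_of_mem hq]; omega)
    rw [pow_succ', Matrix.mul_apply]
    refine (mul_pos hstep hrest).trans_le (Finset.single_le_sum (f := fun Z =>
      G.transitionMatrix X Z * (G.transitionMatrix ^ t) Z ∅) (fun Z _ => ?_) (Finset.mem_univ _))
    exact mul_nonneg (Matrix.nonneg_of_mem_rowStochastic G.transitionMatrix_mem_rowStochastic)
      (Matrix.nonneg_of_mem_rowStochastic (pow_mem G.transitionMatrix_mem_rowStochastic t))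

theorem le_fp_of_le_mulVec [Nonempty V] {φ : Finset V → ℝ} (hφ1 : φ ≤ 1) (hφ0 : φ ∅ = 0)
    (hsub : φ ≤ G.transitionMatrix *ᵥ φ) (S : Finset V) : φ S ≤ G.fp S := by
  have hT := G.transitionMatrix_mem_rowStochastic
  have habs : ∀ X : Finset V, (∀ u v, moranNext X u v = X) → G.transitionMatrix.IsAbsorbing X :=
    fun X => G.isAbsorbing_of_forall_moranNext_eq
  simp only [fp, stepN_eq_pow]
  exact Matrix.le_iSup_pow_apply_of_le_mulVec hT (habs ∅ (by simp [moranNext]))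
    (habs Finset.univ (by simp [moranNext]))
    (fun X hX => G.pow_transitionMatrix_apply_empty_pos _ X hX (Finset.card_le_univ X))
    hφ1 hφ0 hsub S

end FitnessGraph

namespace SetCover

variable {U : Type} {𝒮 : Finset (Finset U)}

def Covers (X : Finset ({A // A ∈ 𝒮} ⊕ U)) : Prop :=
  ∀ e : U, ∃ A : {A // A ∈ 𝒮}, Sum.inl A ∈ X ∧ e ∈ A.1

variable {X : Finset ({A // A ∈ 𝒮} ⊕ U)}

lemma Covers.mono {Y : Finset ({A // A ∈ 𝒮} ⊕ U)} (hX : Covers X) (hXY : X ⊆ Y) : Covers Y :=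
  fun e => (hX e).imp fun _ h => ⟨hXY h.1, h.2⟩

lemma not_covers_empty [Nonempty U] : ¬ Covers (∅ : Finset ({A // A ∈ 𝒮} ⊕ U)) := fun h => by
  obtain ⟨_, h, _⟩ := h (Classical.arbitrary U)
  exact Finset.notMem_empty _ h

variable [DecidableEq U]

lemma Covers.erase_inr (hX : Covers X) (e : U) : Covers (X.erase (Sum.inr e)) :=
  fun e' => (hX e').imp fun _ h => ⟨Finset.mem_erase.2 ⟨Sum.inl_ne_inr, h.1⟩, h.2⟩

variable [Fintype U]

noncomputable def potential (qa qb : ℝ) (X : Finset ({A // A ∈ 𝒮} ⊕ U)) : ℝ :=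
  if Covers X then ∏ v ∈ Xᶜ, Sum.elim (fun _ => qa) (fun _ => qb) v else 0

variable {qa qb : ℝ}

lemma potential_nonneg (hqa : 0 ≤ qa) (hqb : 0 ≤ qb) : 0 ≤ potential qa qb X := by
  unfold potential; split_ifs
  · exact Finset.prod_nonneg fun v _ => by cases v <;> assumption
  · exact le_rfl

lemma potential_le_one (hqa0 : 0 ≤ qa) (hqa1 : qa ≤ 1) (hqb0 : 0 ≤ qb) (hqb1 : qb ≤ 1) :
    potential qa qb X ≤ 1 := by
  unfold potential; split_ifs
  · exact Finset.prod_le_one (fun v _ => by cases v <;> assumption)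
      fun v _ => by cases v <;> assumption
  · exact zero_le_one

lemma potential_empty [Nonempty U] : potential qa qb (∅ : Finset ({A // A ∈ 𝒮} ⊕ U)) = 0 :=
  if_neg not_covers_empty

lemma Covers.potential_eq_mul_insert (hX : Covers X) {v : {A // A ∈ 𝒮} ⊕ U} (hv : v ∉ X) :
    potential qa qb X = Sum.elim (fun _ => qa) (fun _ => qb) v * potential qa qb (insert v X) := by
  rw [potential, potential, if_pos hX, if_pos (hX.mono (Finset.subset_insert v X)),
    Finset.compl_insert, Finset.mul_prod_erase _ _ (Finset.mem_compl.2 hv)]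

lemma Covers.potential_erase_inr (hX : Covers X) {e : U} (he : Sum.inr e ∈ X) :
    potential qa qb (X.erase (Sum.inr e)) = qb * potential qa qb X := by
  conv_rhs => rw [← Finset.insert_erase he]
  exact (hX.erase_inr e).potential_eq_mul_insert (Finset.notMem_erase _ _)

lemma Covers.pow_card_le_potential (hX : Covers X) {q : ℝ} (hq0 : 0 ≤ q) (hq1 : q ≤ 1)
    (hqa : q ≤ qa) (hqb : q ≤ qb) :
    q ^ Fintype.card ({A // A ∈ 𝒮} ⊕ U) ≤ potential qa qb X := by
  rw [potential, if_pos hX]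
  calc q ^ Fintype.card ({A // A ∈ 𝒮} ⊕ U) ≤ q ^ Xᶜ.card :=
        pow_le_pow_of_le_one hq0 hq1 (Finset.card_le_univ _)
    _ = ∏ _ ∈ Xᶜ, q := (Finset.prod_const q).symm
    _ ≤ _ := Finset.prod_le_prod (fun _ _ => hq0) fun v _ => by cases v <;> assumption

variable {x y : ℝ} {G : FitnessGraph ({A // A ∈ 𝒮} ⊕ U)}

lemma drift_eq_sum_pairs (hG : IsSetCoverGraph 𝒮 x y G) (φ : Finset ({A // A ∈ 𝒮} ⊕ U) → ℝ) :
    G.drift φ X = ∑ e : U, ∑ A : {A // A ∈ 𝒮},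
      (G.driftTerm φ X (Sum.inl A) (Sum.inr e) + G.driftTerm φ X (Sum.inr e) (Sum.inl A)) := by
  obtain ⟨-, hwAA, -, hwee, -⟩ := hG
  have hAA : ∀ A B, G.driftTerm φ X (Sum.inl A) (Sum.inl B) = 0 := by
    simp [FitnessGraph.driftTerm, hwAA]
  have hee : ∀ e e', G.driftTerm φ X (Sum.inr e) (Sum.inr e') = 0 := by
    simp [FitnessGraph.driftTerm, hwee]
  simp only [FitnessGraph.drift, Fintype.sum_sum_type, hAA, hee, Finset.sum_const_zero,
    zero_add, add_zero, Finset.sum_add_distrib]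
  rw [add_comm, Finset.sum_comm]

local notation "Φ" => potential qa qb

open FitnessGraph in
lemma driftTerm_add_driftTerm_nonneg_of_mem (hG : IsSetCoverGraph 𝒮 x y G) (hqa0 : 0 ≤ qa)
    (hqb0 : 0 ≤ qb) (hqb1 : qb ≤ 1) (hqa : qa * (1 - qb) * 𝒮.card ≤ y * (1 - qa))
    (hX : Covers X) {e : U} (he : Sum.inr e ∈ X) (A : {A // A ∈ 𝒮}) :
    0 ≤ G.driftTerm Φ X (Sum.inl A) (Sum.inr e) + G.driftTerm Φ X (Sum.inr e) (Sum.inl A) := by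
  obtain ⟨-, -, hweA, -, -, hme, hr⟩ := hG
  by_cases hA : Sum.inl A ∈ X
  · simp [driftTerm, moranNext, hA, he]
  have hP : Φ X = qa * Φ (insert (Sum.inl A) X) := hX.potential_eq_mul_insert hA
  have hΦ : 0 ≤ Φ (insert (Sum.inl A) X) := potential_nonneg hqa0 hqb0
  have hM : (0 : ℝ) < 𝒮.card := Nat.cast_pos.2 (Finset.card_pos.2 ⟨A.1, A.2⟩)
  have hloss : -((1 - qb) * Φ X) ≤ G.driftTerm Φ X (Sum.inl A) (Sum.inr e) := by
    rw [driftTerm, fit, if_neg hA, hr, moranNext, if_neg hA, hX.potential_erase_inr he]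
    have := G.w_le_one (Sum.inl A) (Sum.inr e)
    have := mul_nonneg (sub_nonneg.2 hqb1) (potential_nonneg (X := X) hqa0 hqb0)
    nlinarith
  have hgain : G.driftTerm Φ X (Sum.inr e) (Sum.inl A)
      = y / 𝒮.card * (1 - qa) * Φ (insert (Sum.inl A) X) := by
    rw [driftTerm, fit, if_pos he, hme, hweA, moranNext, if_pos he, hP]
    ring
  have hrate : qa * (1 - qb) ≤ y / 𝒮.card * (1 - qa) := by
    rw [div_mul_eq_mul_div, le_div_iff₀ hM]
    exact hqa
  rw [hP] at hloss
  nlinarith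

open FitnessGraph in
lemma driftTerm_inl_inr_of_notMem (hG : IsSetCoverGraph 𝒮 x y G) (hX : Covers X) {e : U}
    (he : Sum.inr e ∉ X) {A : {A // A ∈ 𝒮}} (hA : Sum.inl A ∈ X) :
    G.driftTerm Φ X (Sum.inl A) (Sum.inr e)
      = x * (1 - qb) * G.w (Sum.inl A) (Sum.inr e) * Φ (insert (Sum.inr e) X) := by
  obtain ⟨-, -, -, -, hmA, -⟩ := hG
  rw [driftTerm, fit, if_pos hA, hmA, moranNext, if_pos hA,
    hX.potential_eq_mul_insert he, Sum.elim_inr]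
  ring

open FitnessGraph in
lemma driftTerm_inl_inr_nonneg_of_notMem (hG : IsSetCoverGraph 𝒮 x y G) (hqa0 : 0 ≤ qa)
    (hqb0 : 0 ≤ qb) (hqb : qb * Fintype.card U ≤ x * (1 - qb)) (hX : Covers X) {e : U}
    (he : Sum.inr e ∉ X) (A : {A // A ∈ 𝒮}) : 0 ≤ G.driftTerm Φ X (Sum.inl A) (Sum.inr e) := by
  by_cases hA : Sum.inl A ∈ X
  · rw [driftTerm_inl_inr_of_notMem hG hX he hA]
    have : 0 ≤ x * (1 - qb) := le_trans (by positivity) hqb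
    have := G.w_nonneg (Sum.inl A) (Sum.inr e)
    have := potential_nonneg (X := insert (Sum.inr e) X) hqa0 hqb0
    positivity
  · simp [driftTerm, moranNext, hA, he]

lemma potential_le_driftTerm_of_mem_of_notMem (hG : IsSetCoverGraph 𝒮 x y G) (hqa0 : 0 ≤ qa)
    (hqb0 : 0 ≤ qb) (hqb : qb * Fintype.card U ≤ x * (1 - qb)) (hX : Covers X) {e : U}
    (he : Sum.inr e ∉ X) {A : {A // A ∈ 𝒮}} (hA : Sum.inl A ∈ X) (heA : e ∈ A.1) :
    Φ X ≤ G.driftTerm Φ X (Sum.inl A) (Sum.inr e) := by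
  have hΦ : 0 ≤ Φ (insert (Sum.inr e) X) := potential_nonneg hqa0 hqb0
  have hcard : (0 : ℝ) < A.1.card := Nat.cast_pos.2 (Finset.card_pos.2 ⟨e, heA⟩)
  have hcardU : (A.1.card : ℝ) ≤ Fintype.card U := Nat.cast_le.2 (Finset.card_le_univ _)
  rw [driftTerm_inl_inr_of_notMem hG hX he hA, hG.1, if_pos heA, hX.potential_eq_mul_insert he,
    Sum.elim_inr, mul_one_div, div_mul_eq_mul_div, le_div_iff₀ hcard]
  calc qb * Φ (insert (Sum.inr e) X) * A.1.card
      ≤ qb * Φ (insert (Sum.inr e) X) * Fintype.card U :=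
        mul_le_mul_of_nonneg_left hcardU (by positivity)
    _ = qb * Fintype.card U * Φ (insert (Sum.inr e) X) := by ring
    _ ≤ x * (1 - qb) * Φ (insert (Sum.inr e) X) := mul_le_mul_of_nonneg_right hqb hΦ

open FitnessGraph in
lemma neg_w_mul_le_driftTerm_of_notMem (hG : IsSetCoverGraph 𝒮 x y G) (hqa0 : 0 ≤ qa)
    (hqb0 : 0 ≤ qb) {e : U} (he : Sum.inr e ∉ X) (A : {A // A ∈ 𝒮}) :
    -(G.w (Sum.inr e) (Sum.inl A) * Φ X) ≤ G.driftTerm Φ X (Sum.inr e) (Sum.inl A) := by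
  obtain ⟨-, -, -, -, -, -, hr⟩ := hG
  have hw := G.w_nonneg (Sum.inr e) (Sum.inl A)
  have hP0 : 0 ≤ Φ X := potential_nonneg hqa0 hqb0
  by_cases hA : Sum.inl A ∈ X
  · rw [driftTerm, fit, if_neg he, hr, moranNext, if_neg he]
    have := potential_nonneg (X := X.erase (Sum.inl A)) hqa0 hqb0
    nlinarith
  · simp only [driftTerm, moranNext, if_neg he, Finset.erase_eq_of_notMem hA, sub_self,
      mul_zero, Left.neg_nonpos_iff]
    positivity

lemma sum_driftTerm_add_driftTerm_nonneg_of_notMem (hG : IsSetCoverGraph 𝒮 x y G)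
    (hqa0 : 0 ≤ qa) (hqb0 : 0 ≤ qb) (hqb : qb * Fintype.card U ≤ x * (1 - qb))
    (hX : Covers X) {e : U} (he : Sum.inr e ∉ X) :
    0 ≤ ∑ A : {A // A ∈ 𝒮},
      (G.driftTerm Φ X (Sum.inl A) (Sum.inr e) + G.driftTerm Φ X (Sum.inr e) (Sum.inl A)) := by
  obtain ⟨A₀, hA₀, heA₀⟩ := hX e
  have hw : ∑ A : {A // A ∈ 𝒮}, G.w (Sum.inr e) (Sum.inl A) ≤ 1 := by
    have := G.w_rowsum (Sum.inr e)
    rw [Fintype.sum_sum_type] at this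
    linarith [Finset.sum_nonneg fun e' (_ : e' ∈ Finset.univ) =>
      G.w_nonneg (Sum.inr e) (Sum.inr e')]
  have hP0 : 0 ≤ Φ X := potential_nonneg hqa0 hqb0
  calc (0 : ℝ) ≤ Φ X - (∑ A : {A // A ∈ 𝒮}, G.w (Sum.inr e) (Sum.inl A)) * Φ X := by nlinarith
    _ ≤ G.driftTerm Φ X (Sum.inl A₀) (Sum.inr e)
        + ∑ A : {A // A ∈ 𝒮}, -(G.w (Sum.inr e) (Sum.inl A) * Φ X) := by
      rw [Finset.sum_neg_distrib, Finset.sum_mul]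
      linarith [potential_le_driftTerm_of_mem_of_notMem hG hqa0 hqb0 hqb hX he hA₀ heA₀]
    _ ≤ _ := by
      rw [Finset.sum_add_distrib]
      exact add_le_add (Finset.single_le_sum
          (fun A _ => driftTerm_inl_inr_nonneg_of_notMem hG hqa0 hqb0 hqb hX he A)
          (Finset.mem_univ A₀))
        (Finset.sum_le_sum fun A _ => neg_w_mul_le_driftTerm_of_notMem hG hqa0 hqb0 he A)

lemma potential_le_transitionMatrix_mulVec (hG : IsSetCoverGraph 𝒮 x y G) [Nonempty U]
    (hqa0 : 0 ≤ qa) (hqb0 : 0 ≤ qb) (hqb1 : qb ≤ 1)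
    (hqa : qa * (1 - qb) * 𝒮.card ≤ y * (1 - qa)) (hqb : qb * Fintype.card U ≤ x * (1 - qb)) :
    potential qa qb ≤ G.transitionMatrix *ᵥ potential qa qb := by
  intro X
  by_cases hX : Covers X
  · refine G.le_mulVec_of_drift_nonneg ?_
    rw [drift_eq_sum_pairs hG]
    refine Finset.sum_nonneg fun e _ => ?_
    by_cases he : Sum.inr e ∈ X
    · exact Finset.sum_nonneg fun A _ =>
        driftTerm_add_driftTerm_nonneg_of_mem hG hqa0 hqb0 hqb1 hqa hX he A
    · exact sum_driftTerm_add_driftTerm_nonneg_of_notMem hG hqa0 hqb0 hqb hX he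
  · rw [potential, if_neg hX]
    exact Matrix.nonneg_mulVec_of_mem_rowStochastic G.transitionMatrix_mem_rowStochastic
      (fun _ => potential_nonneg hqa0 hqb0) X

theorem potential_le_fp [Nonempty U] (hG : IsSetCoverGraph 𝒮 x y G) (hqa0 : 0 ≤ qa)
    (hqa1 : qa ≤ 1) (hqb0 : 0 ≤ qb) (hqb1 : qb ≤ 1)
    (hqa : qa * (1 - qb) * 𝒮.card ≤ y * (1 - qa)) (hqb : qb * Fintype.card U ≤ x * (1 - qb))
    (S : Finset ({A // A ∈ 𝒮} ⊕ U)) : potential qa qb S ≤ G.fp S :=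
  G.le_fp_of_le_mulVec (φ := potential qa qb) (fun _ => potential_le_one hqa0 hqa1 hqb0 hqb1)
    potential_empty (potential_le_transitionMatrix_mulVec hG hqa0 hqb0 hqb1 hqa hqb) S

theorem potential_rates_le_fp [Nonempty U] (hG : IsSetCoverGraph 𝒮 x y G) (hx : 0 < x)
    (hy : 0 < y) {N : ℝ} (hN : Fintype.card U ≤ N) (S : Finset ({A // A ∈ 𝒮} ⊕ U)) :
    potential (y * (x + N) / (y * (x + N) + 𝒮.card * N)) (x / (x + N)) S ≤ G.fp S := by
  have hN0 : 0 ≤ N := (Nat.cast_nonneg _).trans hN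
  have hxN : 0 < x + N := by linarith
  have hD : 0 < y * (x + N) + 𝒮.card * N := by positivity
  have hqb : 1 - x / (x + N) = N / (x + N) := by field_simp; ring
  refine potential_le_fp hG (by positivity) ((div_le_one hD).2 (by nlinarith [hN0]))
    (by positivity) ((div_le_one hxN).2 (by linarith)) (le_of_eq ?_) ?_ S
  · rw [hqb, one_sub_div hD.ne']
    field_simp
    ring
  · rw [hqb, div_mul_eq_mul_div, mul_div_assoc', div_le_div_iff_of_pos_right hxN]
    gcongr

end SetCover

lemma div_one_sub_mul_le_div {c α p s : ℝ} (hc : 0 ≤ c) (hα0 : 0 ≤ α) (hα1 : α < 1)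
    (hp : 0 < p) (hs : 0 ≤ s) (h : c * α * s ≤ p * (1 - α)) :
    c * α / (1 - (1 - c) * α) ≤ p / (p + s) := by
  rw [div_le_div_iff₀ (by nlinarith) (by linarith)]
  linarith

lemma pow_mul_sq_le_mul_one_sub {x N : ℝ} (hx : 0 < x) (hN : 0 < N) {n : ℕ} (hn : n ≠ 0) :
    ((x / N) / (x / N + N)) ^ n * N ^ 2 ≤ x * (1 - ((x / N) / (x / N + N)) ^ n) := by
  set β := (x / N) / (x / N + N)
  have hβ0 : 0 ≤ β := by positivity
  have hβ : β * N ^ 2 = x * (1 - β) := by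
    unfold β; field_simp; ring
  have hβ1 : β ≤ 1 := by nlinarith
  have := pow_le_of_le_one hβ0 hβ1 hn
  nlinarith

lemma div_one_sub_mul_le_rates {x y M N α : ℝ} (hx : 0 < x) (hy0 : 0 < y) (hy1 : y ≤ 1)
    (hM : 0 ≤ M) (hMN : M ≤ N) (hN : 1 ≤ N) (hα0 : 0 ≤ α) (hαN : α * N ^ 2 ≤ x * (1 - α)) :
    0 ≤ y / N ^ 2 * α / (1 - (1 - y / N ^ 2) * α) ∧
      y / N ^ 2 * α / (1 - (1 - y / N ^ 2) * α) ≤ x / (x + N) ∧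
      y / N ^ 2 * α / (1 - (1 - y / N ^ 2) * α) ≤ y * (x + N) / (y * (x + N) + M * N) := by
  have hN2 : 1 ≤ N ^ 2 := one_le_pow₀ hN
  have hα1 : α < 1 := by nlinarith
  have hc : 0 ≤ y / N ^ 2 := by positivity
  have hcα : y / N ^ 2 * α * N ^ 2 = y * α := by field_simp
  refine ⟨div_nonneg (by positivity) (by nlinarith [mul_nonneg hc hα0]), ?_, ?_⟩
  · refine div_one_sub_mul_le_div hc hα0 hα1 hx (by linarith) ?_
    calc y / N ^ 2 * α * N ≤ y / N ^ 2 * α * N ^ 2 := by gcongr; nlinarith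
      _ = y * α := hcα
      _ ≤ N ^ 2 * α := by gcongr; linarith
      _ ≤ x * (1 - α) := by linarith
  · refine div_one_sub_mul_le_div hc hα0 hα1 (by positivity) (by positivity) ?_
    calc y / N ^ 2 * α * (M * N) ≤ y / N ^ 2 * α * N ^ 2 := by gcongr; nlinarith
      _ = y * α := hcα
      _ ≤ y * ((x + N) * (1 - α)) := by
        gcongr
        nlinarith [mul_nonneg hα0 (sub_nonneg.2 hN2)]
      _ = y * (x + N) * (1 - α) := by ring

theorem fp_lower_of_cover_general {U : Type} [Fintype U] [DecidableEq U] [Nonempty U]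
    (𝒮 : Finset (Finset U))
    (x y : ℝ) (hx : 1 ≤ x) (hy0 : 0 < y) (hy1 : y ≤ 1)
    (G : FitnessGraph ({A // A ∈ 𝒮} ⊕ U)) (hG : IsSetCoverGraph 𝒮 x y G)
    (S : Finset ({A // A ∈ 𝒮} ⊕ U))
    (hScov : ∀ e : U, ∃ A : {A // A ∈ 𝒮}, Sum.inl A ∈ S ∧ e ∈ A.1)
    (n : ℕ) (hn : n = Fintype.card ({A // A ∈ 𝒮} ⊕ U))
    (α : ℝ) (hα : α = ((x / (n : ℝ)) / (x / (n : ℝ) + (n : ℝ))) ^ n) :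
    ((y / (n : ℝ) ^ 2) * α / (1 - (1 - y / (n : ℝ) ^ 2) * α)) ^ n ≤ G.fp S := by
  have hx0 : 0 < x := by linarith
  have hN : (n : ℝ) = 𝒮.card + Fintype.card U := by
    rw [hn, Fintype.card_sum, Fintype.card_coe, Nat.cast_add]
  have hU : (1 : ℝ) ≤ Fintype.card U := Nat.one_le_cast.2 Fintype.card_pos
  have hn0 : n ≠ 0 := hn ▸ Fintype.card_ne_zero
  have hαN : α * n ^ 2 ≤ x * (1 - α) := hα ▸ pow_mul_sq_le_mul_one_sub hx0 (by positivity) hn0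
  obtain ⟨hq0, hqb, hqa⟩ := div_one_sub_mul_le_rates hx0 hy0 hy1 (Nat.cast_nonneg 𝒮.card)
    (by linarith) (by linarith) (by rw [hα]; positivity) hαN
  have hpow := SetCover.Covers.pow_card_le_potential hScov hq0
    (hqb.trans ((div_le_one (by linarith)).2 (by linarith))) hqa hqb
  rw [← hn] at hpow
  exact hpow.trans (SetCover.potential_rates_le_fp hG hx0 hy0 (by linarith) S)

/-- If the seed set `S` covers the universe, then, with `α = ((x/n)/((x/n)+n))^n`, the
fixation probability in the Set Cover fitness graph is at least
`((y/n²)·α / (1 − (1 − y/n²)·α))^n`. -/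
theorem fp_lower_of_cover {U : Type} [Fintype U] [DecidableEq U] [Nonempty U]
    (𝒮 : Finset (Finset U)) (hne : ∀ A ∈ 𝒮, A.Nonempty) (hcov : ∀ e : U, ∃ A ∈ 𝒮, e ∈ A)
    (x y : ℝ) (hx : 1 ≤ x) (hy0 : 0 < y) (hy1 : y ≤ 1)
    (G : FitnessGraph ({A // A ∈ 𝒮} ⊕ U)) (hG : IsSetCoverGraph 𝒮 x y G)
    (S : Finset ({A // A ∈ 𝒮} ⊕ U))
    (hScov : ∀ e : U, ∃ A : {A // A ∈ 𝒮}, Sum.inl A ∈ S ∧ e ∈ A.1)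
    (n : ℕ) (hn : n = Fintype.card ({A // A ∈ 𝒮} ⊕ U))
    (α : ℝ) (hα : α = ((x / (n : ℝ)) / (x / (n : ℝ) + (n : ℝ))) ^ n) :
    ((y / (n : ℝ) ^ 2) * α / (1 - (1 - y / (n : ℝ) ^ 2) * α)) ^ n ≤ G.fp S :=
  fp_lower_of_cover_general 𝒮 x y hx hy0 hy1 G hG S hScov n hn α hα
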